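/- For every n ≥ 0 the identity (x²−1)·P_n^(1)(x;ζ) = p_n·P_n^(0)(x;ζ) + q_n·P_{n+1}^(0)(x;ζ) + r_{n+1}·P_{n+2}^(0)(x;ζ) holds identically in x. Moreover q_n admits the two closed-form expressions q_n = (c_{n+1}^(0)/c_n^(1))·Σ_{i=1}^{n+1} (x_{i,n+1}^(1) − x_{i,n+1}^(0)) = (c_n^(1)/c_{n+1}^(0))·((Σ_{i=1}^{n+2} x_{i,n+2}^(0)) − (Σ_{i=1}^{n} x_{i,n}^(1))). -/

import Mathlib

open MeasureTheory Polynomial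

noncomputable def besselK (n : ℕ) (ζ : ℝ) : ℝ :=
  ∫ t in Set.Ioi (0 : ℝ), Real.cosh ((n : ℝ) * t) * Real.exp (-ζ * Real.cosh t)

noncomputable def Gfun (ζ : ℝ) : ℝ := besselK 2 ζ / besselK 1 ζ

noncomputable def wgt (ℓ : ℕ) (ζ x : ℝ) : ℝ :=
  (x ^ 2 - 1) ^ ((ℓ : ℝ) - 1 / 2) * Real.exp (-ζ * x) / besselK 1 ζ

/-!
Since `ω⁽¹⁾ = (x² - 1) ω⁽⁰⁾`, the coefficient of `P⁽⁰⁾ₖ` in the expansion of `(x² - 1) P⁽¹⁾ₙ` is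
the `ω⁽¹⁾`-pairing of `P⁽⁰⁾ₖ` with `P⁽¹⁾ₙ`. It vanishes for `k < n`, because `P⁽¹⁾ₙ` is orthogonal
to all polynomials of lower degree, so only `k = n, n + 1, n + 2` survive, and the outer two
coefficients are read off from leading coefficients. The formulas for `qₙ` come from comparing
next-to-leading coefficients, which are `-c ∑ xᵢ` for `c ∏ (x - xᵢ)`: in the expansion of `P⁽⁰⁾ₙ₊₁`
in the basis `P⁽¹⁾` for the first one, and in the three-term identity itself for the second.
-/

open Finset

noncomputable def weightedInner (μ : Measure ℝ) (w : ℝ → ℝ) (f g : ℝ[X]) : ℝ :=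
  ∫ x, f.eval x * g.eval x * w x ∂μ

section WeightedInner

variable {μ : Measure ℝ} {w : ℝ → ℝ}

lemma weightedInner_comm (f g : ℝ[X]) : weightedInner μ w f g = weightedInner μ w g f := by
  simp only [weightedInner, mul_comm (f.eval _)]

lemma weightedInner_mul_left {w' : ℝ → ℝ} {h : ℝ[X]} (hw : ∀ᵐ x ∂μ, w' x = h.eval x * w x)
    (f g : ℝ[X]) : weightedInner μ w (h * f) g = weightedInner μ w' f g := by
  refine integral_congr_ae (hw.mono fun x hx => ?_)
  simp only [eval_mul, hx]
  ring

end WeightedInner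

structure IsOrthonormalPolySeq (μ : Measure ℝ) (w : ℝ → ℝ) (Q : ℕ → ℝ[X]) : Prop where
  degree_eq : ∀ n, (Q n).degree = n
  weightedInner_eq : ∀ m n, weightedInner μ w (Q m) (Q n) = if m = n then 1 else 0
  integrable : ∀ m n, Integrable (fun x => (Q m).eval x * (Q n).eval x * w x) μ

namespace IsOrthonormalPolySeq

variable {μ : Measure ℝ} {w : ℝ → ℝ} {Q : ℕ → ℝ[X]}

lemma of_nonneg (hw : ∀ᵐ x ∂μ, 0 ≤ w x) (hwm : AEStronglyMeasurable w μ)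
    (hdeg : ∀ n, (Q n).natDegree = n)
    (horth : ∀ m n, weightedInner μ w (Q m) (Q n) = if m = n then 1 else 0) :
    IsOrthonormalPolySeq μ w Q where
  degree_eq n := by
    have hne : Q n ≠ 0 := fun h => by simpa [weightedInner, h] using horth n n
    rw [degree_eq_natDegree hne, hdeg]
  weightedInner_eq := horth
  integrable m n := by
    have hdiag k : Integrable (fun x => (Q k).eval x * (Q k).eval x * w x) μ := by
      by_contra h
      simpa [weightedInner, integral_undef h] using horth k k
    refine ((hdiag m).add (hdiag n)).mono'
      (((Q m).continuous.aestronglyMeasurable.mul (Q n).continuous.aestronglyMeasurable).mul hwm)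
      (hw.mono fun x hx => ?_)
    -- `2|ab| ≤ a² + b²`, weighted by `w x ≥ 0`
    rw [Pi.add_apply, Real.norm_eq_abs, abs_le]
    constructor <;> nlinarith [mul_nonneg (sq_nonneg ((Q m).eval x + (Q n).eval x)) hx,
      mul_nonneg (sq_nonneg ((Q m).eval x - (Q n).eval x)) hx]

lemma natDegree_eq (hQ : IsOrthonormalPolySeq μ w Q) (n : ℕ) : (Q n).natDegree = n :=
  natDegree_eq_of_degree_eq_some (hQ.degree_eq n)

lemma leadingCoeff_ne_zero (hQ : IsOrthonormalPolySeq μ w Q) (n : ℕ) : (Q n).leadingCoeff ≠ 0 :=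
  Polynomial.leadingCoeff_ne_zero.mpr (ne_zero_of_coe_le_degree (hQ.degree_eq n).ge)

lemma exists_sum_smul_eq (hQ : IsOrthonormalPolySeq μ w Q) {f : ℝ[X]} {N : ℕ}
    (hf : f.natDegree ≤ N) : ∃ b : ℕ → ℝ, ∑ k ∈ range (N + 1), b k • Q k = f := by
  have hspan := (Sequence.mk Q hQ.degree_eq).span_degreeLT (m := N + 1)
    fun i _ => (hQ.leadingCoeff_ne_zero i).isUnit
  have hmem : f ∈ Submodule.span ℝ (Q '' ↑(range (N + 1))) := by
    rw [coe_range, hspan, mem_degreeLT]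
    exact (degree_le_of_natDegree_le hf).trans_lt (by exact_mod_cast N.lt_succ_self)
  exact (Submodule.mem_span_image_finset_iff_exists_fun' ℝ).mp hmem

lemma weightedInner_sum_smul (hQ : IsOrthonormalPolySeq μ w Q) (s : Finset ℕ) (b : ℕ → ℝ)
    (j : ℕ) : weightedInner μ w (∑ k ∈ s, b k • Q k) (Q j) = if j ∈ s then b j else 0 := by
  have hsum x : (∑ k ∈ s, b k • Q k).eval x * (Q j).eval x * w x
      = ∑ k ∈ s, b k * ((Q k).eval x * (Q j).eval x * w x) := by
    simp only [eval_finsetSum, eval_smul, smul_eq_mul, sum_mul, mul_assoc]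
  simp_rw [weightedInner, hsum]
  rw [integral_finsetSum _ fun k _ => (hQ.integrable k j).const_mul (b k)]
  simp_rw [integral_const_mul]
  change ∑ k ∈ s, b k * weightedInner μ w (Q k) (Q j) = _
  simp [hQ.weightedInner_eq]

lemma sum_weightedInner_smul_eq (hQ : IsOrthonormalPolySeq μ w Q) {f : ℝ[X]} {N : ℕ}
    (hf : f.natDegree ≤ N) : ∑ k ∈ range (N + 1), weightedInner μ w f (Q k) • Q k = f := by
  obtain ⟨b, hb⟩ := hQ.exists_sum_smul_eq hf
  conv_rhs => rw [← hb]
  refine sum_congr rfl fun k hk => ?_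
  rw [← hb, hQ.weightedInner_sum_smul, if_pos hk]

lemma weightedInner_eq_zero_of_natDegree_lt (hQ : IsOrthonormalPolySeq μ w Q) {f : ℝ[X]}
    {j : ℕ} (hf : f.natDegree < j) : weightedInner μ w f (Q j) = 0 := by
  obtain ⟨b, hb⟩ := hQ.exists_sum_smul_eq (f := f) le_rfl
  rw [← hb, hQ.weightedInner_sum_smul, if_neg (by simpa using hf.not_ge)]

lemma coeff_eq_weightedInner_mul_add (hQ : IsOrthonormalPolySeq μ w Q) {f : ℝ[X]} {n : ℕ}
    (hf : f.natDegree ≤ n + 1) :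
    f.coeff n = weightedInner μ w f (Q n) * (Q n).leadingCoeff
      + weightedInner μ w f (Q (n + 1)) * (Q (n + 1)).coeff n := by
  conv_lhs => rw [← hQ.sum_weightedInner_smul_eq hf]
  have hlow : ∀ k ∈ range n, (weightedInner μ w f (Q k) • Q k).coeff n = 0 := fun k hk => by
    rw [coeff_smul, coeff_eq_zero_of_natDegree_lt (by simpa [hQ.natDegree_eq] using hk),
      smul_zero]
  rw [finsetSum_coeff, sum_range_succ, sum_range_succ, sum_eq_zero hlow, zero_add,
    coeff_smul, coeff_smul, leadingCoeff, hQ.natDegree_eq, smul_eq_mul, smul_eq_mul]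

lemma weightedInner_eq_leadingCoeff_div (hQ : IsOrthonormalPolySeq μ w Q) {f : ℝ[X]} {n : ℕ}
    (hf : f.natDegree = n) :
    weightedInner μ w f (Q n) = f.leadingCoeff / (Q n).leadingCoeff := by
  have h := hQ.coeff_eq_weightedInner_mul_add (f := f) (n := n) (by omega)
  rw [hQ.weightedInner_eq_zero_of_natDegree_lt (j := n + 1) (by omega), zero_mul, add_zero] at h
  rw [eq_div_iff (hQ.leadingCoeff_ne_zero n), ← h, leadingCoeff, hf]

lemma weightedInner_eq_of_natDegree_eq_succ (hQ : IsOrthonormalPolySeq μ w Q) {f : ℝ[X]}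
    {n : ℕ} (hf : f.natDegree = n + 1) :
    weightedInner μ w f (Q n) = f.leadingCoeff / (Q n).leadingCoeff *
      (f.nextCoeff / f.leadingCoeff - (Q (n + 1)).nextCoeff / (Q (n + 1)).leadingCoeff) := by
  have h := hQ.coeff_eq_weightedInner_mul_add hf.le
  rw [hQ.weightedInner_eq_leadingCoeff_div hf] at h
  have hf0 : f.leadingCoeff ≠ 0 := Polynomial.leadingCoeff_ne_zero.mpr (by rintro rfl; simp at hf)
  rw [nextCoeff_of_natDegree_pos (by omega),
    nextCoeff_of_natDegree_pos (by rw [hQ.natDegree_eq]; omega), hf, hQ.natDegree_eq,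
    Nat.add_sub_cancel, h]
  field_simp [hQ.leadingCoeff_ne_zero n]
  ring

lemma eq_three_term_of_orthogonal_lt (hQ : IsOrthonormalPolySeq μ w Q) {f : ℝ[X]} {n : ℕ}
    (hf : f.natDegree ≤ n + 2) (hlow : ∀ k < n, weightedInner μ w f (Q k) = 0) :
    f = weightedInner μ w f (Q n) • Q n + weightedInner μ w f (Q (n + 1)) • Q (n + 1)
      + weightedInner μ w f (Q (n + 2)) • Q (n + 2) := by
  conv_lhs => rw [← hQ.sum_weightedInner_smul_eq hf]
  rw [sum_range_succ, sum_range_succ, sum_range_succ,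
    sum_eq_zero fun k hk => by rw [hlow k (mem_range.mp hk), zero_smul], zero_add]

end IsOrthonormalPolySeq

theorem mul_eq_three_term {μ : Measure ℝ} {w w' : ℝ → ℝ} {P Q : ℕ → ℝ[X]} {h : ℝ[X]}
    (hP : IsOrthonormalPolySeq μ w P) (hQ : IsOrthonormalPolySeq μ w' Q)
    (hw : ∀ᵐ x ∂μ, w' x = h.eval x * w x) (hh : h.Monic) (hdeg : h.natDegree = 2) (n : ℕ) :
    h * Q n = ((P n).leadingCoeff / (Q n).leadingCoeff) • P n
      + weightedInner μ w' (P (n + 1)) (Q n) • P (n + 1)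
      + ((Q n).leadingCoeff / (P (n + 2)).leadingCoeff) • P (n + 2) := by
  have hdeg' : (h * Q n).natDegree = n + 2 := by
    rw [hh.natDegree_mul' (Polynomial.leadingCoeff_ne_zero.mp (hQ.leadingCoeff_ne_zero n)),
      hdeg, hQ.natDegree_eq, add_comm]
  have hswap k : weightedInner μ w (h * Q n) (P k) = weightedInner μ w' (P k) (Q n) := by
    rw [weightedInner_mul_left hw, weightedInner_comm]
  have hlow k (hk : k < n) : weightedInner μ w (h * Q n) (P k) = 0 := by
    rw [hswap, hQ.weightedInner_eq_zero_of_natDegree_lt (by rwa [hP.natDegree_eq])]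
  rw [hP.eq_three_term_of_orthogonal_lt hdeg'.le hlow, hswap, hswap,
    hQ.weightedInner_eq_leadingCoeff_div (hP.natDegree_eq n),
    hP.weightedInner_eq_leadingCoeff_div hdeg', leadingCoeff_monic_mul hh]

section Factored

variable {R ι : Type*} [CommRing R]

lemma coeff_C_mul_of_natDegree_eq_succ {M : R[X]} {n : ℕ} (hn : M.natDegree = n + 1) (a : R) :
    (C a * M).coeff n = a * M.nextCoeff := by
  rw [coeff_C_mul, nextCoeff_of_natDegree_pos (by omega), hn, Nat.add_sub_cancel]

lemma coeff_C_mul_prod_X_sub_C [Nontrivial R] {s : Finset ι} {n : ℕ} (hs : s.card = n + 1)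
    (a : R) (z : ι → R) : (C a * ∏ i ∈ s, (X - C (z i))).coeff n = -(a * ∑ i ∈ s, z i) := by
  rw [coeff_C_mul, show n = s.card - 1 by omega, prod_X_sub_C_coeff_card_pred _ _ (by omega),
    mul_neg]

lemma monic_X_sq_sub_one : (X ^ 2 - 1 : R[X]).Monic := by
  simpa using monic_X_pow_sub_C (1 : R) two_ne_zero

lemma natDegree_X_sq_sub_one [Nontrivial R] : (X ^ 2 - 1 : R[X]).natDegree = 2 := by
  simpa using natDegree_X_pow_sub_C (n := 2) (r := (1 : R))

lemma nextCoeff_X_sq_sub_one [Nontrivial R] : (X ^ 2 - 1 : R[X]).nextCoeff = 0 := by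
  rw [nextCoeff_of_natDegree_pos (by rw [natDegree_X_sq_sub_one]; norm_num),
    natDegree_X_sq_sub_one]
  simp [coeff_one]

lemma coeff_X_sq_sub_one_mul_C_mul_prod_X_sub_C [Nontrivial R] (s : Finset ι) (a : R) (z : ι → R) :
    ((X ^ 2 - 1) * (C a * ∏ i ∈ s, (X - C (z i)))).coeff (s.card + 1)
      = -(a * ∑ i ∈ s, z i) := by
  have hM : (∏ i ∈ s, (X - C (z i))).Monic := monic_prod_of_monic _ _ fun i _ => monic_X_sub_C _
  rw [mul_left_comm, coeff_C_mul_of_natDegree_eq_succ (by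
      rw [monic_X_sq_sub_one.natDegree_mul hM, natDegree_X_sq_sub_one,
        natDegree_finsetProd_X_sub_C_eq_card]; ring),
    monic_X_sq_sub_one.nextCoeff_mul hM, nextCoeff_X_sq_sub_one, prod_X_sub_C_nextCoeff, zero_add,
    mul_neg]

end Factored

lemma besselK_one_nonneg (ζ : ℝ) : 0 ≤ besselK 1 ζ :=
  setIntegral_nonneg measurableSet_Ioi fun _ _ =>
    mul_nonneg (Real.cosh_pos _).le (Real.exp_pos _).le

lemma measurable_wgt (ℓ : ℕ) (ζ : ℝ) : Measurable (wgt ℓ ζ) := by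
  unfold wgt
  fun_prop

lemma wgt_nonneg (ℓ : ℕ) (ζ : ℝ) {x : ℝ} (hx : 1 < x) : 0 ≤ wgt ℓ ζ x :=
  div_nonneg (mul_nonneg (Real.rpow_nonneg (by nlinarith) _) (Real.exp_pos _).le)
    (besselK_one_nonneg ζ)

lemma wgt_one_eq (ζ : ℝ) {x : ℝ} (hx : 1 < x) : wgt 1 ζ x = (x ^ 2 - 1) * wgt 0 ζ x := by
  have hpos : 0 < x ^ 2 - 1 := by nlinarith
  rw [wgt, wgt, show ((1 : ℕ) : ℝ) - 1 / 2 = 1 + ((0 : ℕ) - 1 / 2) by norm_num,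
    Real.rpow_add hpos, Real.rpow_one]
  ring

lemma wgt_one_ae_eq (ζ : ℝ) :
    ∀ᵐ x ∂volume.restrict (Set.Ioi 1), wgt 1 ζ x = (X ^ 2 - 1 : ℝ[X]).eval x * wgt 0 ζ x :=
  (ae_restrict_mem measurableSet_Ioi).mono fun _ hx => by simpa using wgt_one_eq ζ hx

lemma isOrthonormalPolySeq_wgt {ℓ : ℕ} {ζ : ℝ} {Q : ℕ → ℝ[X]} (hdeg : ∀ n, (Q n).natDegree = n)
    (horth : ∀ m n, (∫ x in Set.Ioi (1 : ℝ), (Q m).eval x * (Q n).eval x * wgt ℓ ζ x)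
      = if m = n then (1 : ℝ) else 0) :
    IsOrthonormalPolySeq (volume.restrict (Set.Ioi 1)) (wgt ℓ ζ) Q :=
  .of_nonneg ((ae_restrict_mem measurableSet_Ioi).mono fun _ hx => wgt_nonneg ℓ ζ hx)
    (measurable_wgt ℓ ζ).aestronglyMeasurable hdeg horth

theorem stmt6
    (ζ : ℝ)
    (P0 P1 : ℕ → Polynomial ℝ) (lc0 lc1 : ℕ → ℝ)
    (hdeg0 : ∀ n, (P0 n).natDegree = n)
    (hdeg1 : ∀ n, (P1 n).natDegree = n)
    (hlc0 : ∀ n, (P0 n).leadingCoeff = lc0 n)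
    (hlc1 : ∀ n, (P1 n).leadingCoeff = lc1 n)
    (horth0 : ∀ m n, (∫ x in Set.Ioi (1 : ℝ),
        (P0 m).eval x * (P0 n).eval x * wgt 0 ζ x) = if m = n then (1 : ℝ) else 0)
    (horth1 : ∀ m n, (∫ x in Set.Ioi (1 : ℝ),
        (P1 m).eval x * (P1 n).eval x * wgt 1 ζ x) = if m = n then (1 : ℝ) else 0)
    (z0 z1 : ℕ → ℕ → ℝ)
    (hzfac0 : ∀ n, P0 n = C (lc0 n) * ∏ i ∈ Finset.Icc 1 n, (X - C (z0 n i)))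
    (hzfac1 : ∀ n, P1 n = C (lc1 n) * ∏ i ∈ Finset.Icc 1 n, (X - C (z1 n i)))
    (p q r : ℕ → ℝ)
    (hp : ∀ n, p n = lc0 n / lc1 n)
    (hr : ∀ n, r (n + 1) = lc1 n / lc0 (n + 2))
    (hq : ∀ n, q n = ∫ x in Set.Ioi (1 : ℝ),
        (P0 (n + 1)).eval x * (P1 n).eval x * wgt 1 ζ x) :
    (∀ n, (X ^ 2 - 1) * P1 n =
      C (p n) * P0 n + C (q n) * P0 (n + 1) + C (r (n + 1)) * P0 (n + 2)) ∧
    (∀ n, q n = (lc0 (n + 1) / lc1 n) *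
      ∑ i ∈ Finset.Icc 1 (n + 1), (z1 (n + 1) i - z0 (n + 1) i)) ∧
    (∀ n, q n = (lc1 n / lc0 (n + 1)) *
      ((∑ i ∈ Finset.Icc 1 (n + 2), z0 (n + 2) i) - ∑ i ∈ Finset.Icc 1 n, z1 n i)) := by
  have hP0 := isOrthonormalPolySeq_wgt hdeg0 horth0
  have hP1 := isOrthonormalPolySeq_wgt hdeg1 horth1
  have hlc0ne n : lc0 n ≠ 0 := hlc0 n ▸ hP0.leadingCoeff_ne_zero n
  have hlc1ne n : lc1 n ≠ 0 := hlc1 n ▸ hP1.leadingCoeff_ne_zero n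
  have hq' n : q n = weightedInner _ (wgt 1 ζ) (P0 (n + 1)) (P1 n) := hq n
  have hthree n : (X ^ 2 - 1) * P1 n =
      C (p n) * P0 n + C (q n) * P0 (n + 1) + C (r (n + 1)) * P0 (n + 2) := by
    rw [mul_eq_three_term hP0 hP1 (wgt_one_ae_eq ζ) monic_X_sq_sub_one natDegree_X_sq_sub_one n,
      hp, hq', hr, hlc0, hlc0, hlc1, smul_eq_C_mul, smul_eq_C_mul, smul_eq_C_mul]
  refine ⟨hthree, fun n => ?_, fun n => ?_⟩
  · rw [hq', hP1.weightedInner_eq_of_natDegree_eq_succ (hdeg0 _), hlc0, hlc1, hlc1, hzfac0,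
      hzfac1, nextCoeff_C_mul, nextCoeff_C_mul, prod_X_sub_C_nextCoeff, prod_X_sub_C_nextCoeff,
      sum_sub_distrib]
    field_simp [hlc0ne, hlc1ne]
    ring
  · have h := congrArg (coeff · (n + 1)) (hthree n)
    simp only [coeff_add, coeff_C_mul] at h
    have hlhs := coeff_X_sq_sub_one_mul_C_mul_prod_X_sub_C (Icc 1 n) (lc1 n) (z1 n)
    rw [Nat.card_Icc, Nat.add_sub_cancel, ← hzfac1] at hlhs
    rw [hlhs, coeff_eq_zero_of_natDegree_lt (by rw [hdeg0]; omega),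
      show (P0 (n + 1)).coeff (n + 1) = lc0 (n + 1) by rw [← hlc0, leadingCoeff, hdeg0],
      hzfac0 (n + 2), coeff_C_mul_prod_X_sub_C (by simp), hr] at h
    field_simp [hlc0ne] at h ⊢
    linear_combination -h
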